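/- arXiv:2206.12777 — 2 statements merged into one kernel-verified Lean document; each statement's English description precedes it below -/
import Mathlib

section
/- A connected mixed multigraph M can be obtained from its underlying graph G(M) by a three-way switching (i.e., there is a diagonal matrix D with diagonal entries in {ω^i : 0 ≤ i ≤ 5} with N(M) = D^{-1} N(G(M)) D) if and only if M is positive, i.e., every mixed cycle of M has weight 1. -/
open Complex Finset

noncomputable section

/-- The primitive sixth root of unity `ω = 1/2 + (√3/2)i`. -/
def omega6 : ℂ := ⟨1/2, Real.sqrt 3 / 2⟩

/-- A loopless undirected multigraph with vertex type `V` and edge type `E`: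
each edge has a pair of distinct endpoints. -/
structure Multigraph (V E : Type) where
  ends : E → Sym2 V
  loopless : ∀ e, ¬ (ends e).IsDiag

variable {V E : Type}

/-- A mixed multigraph with underlying multigraph `G`: each edge is either
unoriented (`none`) or oriented (`some (u, v)`, an arc from `u` to `v`),
the orientation is compatible with the endpoints, and there are no digons
(two parallel edges oriented in opposite directions). -/
structure MixedOrientation (G : Multigraph V E) where
  orient : E → Option (V × V)
  compat : ∀ e a b, orient e = some (a, b) → G.ends e = s(a, b)
  noDigon : ∀ e f a b, G.ends e = G.ends f → orient e = some (a, b) → orient f ≠ some (b, a)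

/-- The underlying graph of `G`, viewed as the mixed multigraph with no oriented edges. -/
def Multigraph.triv (G : Multigraph V E) : MixedOrientation G where
  orient := fun _ => none
  compat := fun _ _ _ h => by simp at h
  noDigon := fun _ _ _ _ _ h => by simp at h

variable [DecidableEq V]

/-- The contribution of edge `e`, traversed from `u` to `v`, to the Hermitian adjacency
matrix entry `N_{uv}` and to walk weights: `1` if `e` is unoriented, `ω` if `e` is an arc
from `u` to `v`, and `conj ω` if `e` is an arc from `v` to `u`. -/
def stepWeight {G : Multigraph V E} (M : MixedOrientation G) (e : E) (u v : V) : ℂ :=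
  match M.orient e with
  | none => 1
  | some (a, _) => if a = u then omega6 else (starRingEnd ℂ) omega6

/-- The Hermitian adjacency matrix `N(M)` of a mixed multigraph:
`N_{uv} = e{u,v} + e(u,v)·ω + e(v,u)·conj ω`. -/
def herm [Fintype V] [Fintype E] {G : Multigraph V E} (M : MixedOrientation G) :
    Matrix V V ℂ :=
  Matrix.of fun u v => ∑ e : E, if G.ends e = s(u, v) then stepWeight M e u v else 0

/-- A (mixed) cycle in the multigraph `G`: a cyclic sequence of `n ≥ 2` distinct vertices
joined by `n` distinct edges. -/
structure MixedCycle (G : Multigraph V E) where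
  n : ℕ
  two_le : 2 ≤ n
  vert : ZMod n → V
  edge : ZMod n → E
  vert_inj : Function.Injective vert
  edge_inj : Function.Injective edge
  ends_eq : ∀ i, G.ends (edge i) = s(vert i, vert (i + 1))

/-- The weight `wt(C) = ω^f · (conj ω)^b` of a mixed cycle `C` in `M`, traversed in
the direction given by its parametrization. -/
def cycleWeight {G : Multigraph V E} (M : MixedOrientation G) (C : MixedCycle G) : ℂ :=
  haveI : NeZero C.n := ⟨by have := C.two_le; omega⟩
  ∏ i : ZMod C.n, stepWeight M (C.edge i) (C.vert i) (C.vert (i + 1))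

/-- The value `ν(C) = wt(C) + conj (wt(C))` of a mixed cycle. -/
def nu {G : Multigraph V E} (M : MixedOrientation G) (C : MixedCycle G) : ℂ :=
  cycleWeight M C + (starRingEnd ℂ) (cycleWeight M C)

/-- The number of forward arcs of a mixed cycle (relative to its direction). -/
def fCount {G : Multigraph V E} (M : MixedOrientation G) (C : MixedCycle G) : ℕ :=
  haveI : NeZero C.n := ⟨by have := C.two_le; omega⟩
  (Finset.univ.filter fun i : ZMod C.n =>
    M.orient (C.edge i) = some (C.vert i, C.vert (i + 1))).card

/-- The number of backward arcs of a mixed cycle (relative to its direction). -/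
def bCount {G : Multigraph V E} (M : MixedOrientation G) (C : MixedCycle G) : ℕ :=
  haveI : NeZero C.n := ⟨by have := C.two_le; omega⟩
  (Finset.univ.filter fun i : ZMod C.n =>
    M.orient (C.edge i) = some (C.vert (i + 1), C.vert i)).card

/-- The edge set of a mixed cycle. -/
def cycleEdges [DecidableEq E] {G : Multigraph V E} (C : MixedCycle G) : Finset E :=
  haveI : NeZero C.n := ⟨by have := C.two_le; omega⟩
  Finset.image C.edge Finset.univ

/-- Reachability in `G` using only edges from the set `S`. -/
def ReachIn (G : Multigraph V E) (S : Set E) (u v : V) : Prop :=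
  Relation.ReflTransGen (fun x y => ∃ e ∈ S, G.ends e = s(x, y)) u v

/-- A multigraph is connected if every two vertices are joined by a walk. -/
def Multigraph.Connected (G : Multigraph V E) : Prop :=
  ∀ u v : V, ReachIn G Set.univ u v

/-- All entries of the diagonal `d` are sixth roots of unity `ω^i`, `0 ≤ i ≤ 5`. -/
def IsSixthRoots (d : V → ℂ) : Prop := ∀ v, ∃ i : ℕ, i ≤ 5 ∧ d v = omega6 ^ i

/-- `M''` is obtained from `M'` by a three-way switching: `N(M'') = D⁻¹ N(M') D` for
some diagonal matrix `D` whose diagonal entries are sixth roots of unity. -/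
def Switching [Fintype V] [Fintype E] {G : Multigraph V E}
    (M' M'' : MixedOrientation G) : Prop :=
  ∃ d : V → ℂ, IsSixthRoots d ∧
    herm M'' = (Matrix.diagonal d)⁻¹ * herm M' * Matrix.diagonal d

/-- `M'` is the converse of `M`: every arc of `M` is reversed. -/
def IsConverse {G : Multigraph V E} (M M' : MixedOrientation G) : Prop :=
  ∀ e, M'.orient e = Option.map Prod.swap (M.orient e)

/-- `M'` and `M''` are switching equivalent: one is obtained from the other by a
three-way switching and/or taking a converse. -/
def SwitchEquiv [Fintype V] [Fintype E] {G : Multigraph V E}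
    (M' M'' : MixedOrientation G) : Prop :=
  Switching M' M'' ∨ ∃ Mc : MixedOrientation G, IsConverse M' Mc ∧ Switching Mc M''

/-- `T` is (the edge set of) a spanning tree of `G`: it connects all vertices and
contains no cycle. -/
def IsSpanningTree (G : Multigraph V E) (T : Set E) : Prop :=
  (∀ u v : V, ReachIn G T u v) ∧ ∀ C : MixedCycle G, ¬ (∀ i, C.edge i ∈ T)

/-- `C` is a fundamental cycle with respect to the spanning tree `T`: it uses exactly
one non-tree edge. -/
def IsFundamentalCycle (G : Multigraph V E) (T : Set E) (C : MixedCycle G) : Prop :=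
  ∃ e, e ∉ T ∧ ∀ i, C.edge i = e ∨ C.edge i ∈ T

end

/-!
If `N(M) = D⁻¹ N(G(M)) D`, the `(u, v)` entry says that the `k` unit complex numbers
contributed by the `k` edges joining `u` and `v` add up to `k · d_u⁻¹ d_v`, so each of them
equals `d_u⁻¹ d_v`; the weight of a cycle then telescopes to `1`.

Conversely, if every cycle has weight `1` then so does every closed walk: cutting a walk at the
first return to a vertex splits off either a cycle or an edge traversed back and forth. Hence on
a connected graph the weight of a walk from a fixed root to `v` depends only on `v`. These
weights are powers of `ω`, and they form the diagonal of the switching.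
-/

variable {V E : Type}

lemma Complex.eq_one_of_sum_eq_card {ι : Type*} {s : Finset ι} {z : ι → ℂ}
    (hz : ∀ i ∈ s, ‖z i‖ ≤ 1) (hsum : ∑ i ∈ s, z i = s.card) {i : ι} (hi : i ∈ s) :
    z i = 1 := by
  have hre_le (j : ι) (hj : j ∈ s) : (z j).re ≤ 1 := (Complex.re_le_norm _).trans (hz j hj)
  have hre : (z i).re = 1 := by
    refine (Finset.sum_eq_sum_iff_of_le hre_le).mp ?_ i hi
    simpa [← Complex.re_sum] using congrArg Complex.re hsum
  have him : (z i).im = 0 := by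
    refine Complex.abs_re_eq_norm.mp (le_antisymm (Complex.abs_re_le_norm _) ?_)
    rw [hre, abs_one]
    exact hz i hi
  exact Complex.ext hre him

lemma Matrix.inv_diagonal_mul_mul_diagonal_apply {n K : Type*} [Fintype n] [DecidableEq n]
    [Field K] {d : n → K} (hd : ∀ i, d i ≠ 0) (A : Matrix n n K) (i j : n) :
    ((diagonal d)⁻¹ * A * diagonal d) i j = (d i)⁻¹ * A i j * d j := by
  have hinv : (diagonal d)⁻¹ = diagonal fun i => (d i)⁻¹ := by
    refine Matrix.inv_eq_left_inv ?_
    rw [diagonal_mul_diagonal, ← diagonal_one]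
    exact congrArg diagonal (funext fun i => inv_mul_cancel₀ (hd i))
  rw [hinv, mul_diagonal, diagonal_mul]

namespace Quiver

variable {W : Type*} [Quiver W] {α : Type*} [CommMonoid α] {wt : ∀ {a b : W}, (a ⟶ b) → α}

namespace Path

lemma weight_mem (S : Submonoid α) (hS : ∀ {a b : W} (e : a ⟶ b), wt e ∈ S) {a b : W}
    (p : Path a b) : p.weight wt ∈ S := by
  induction p with
  | nil => rw [weight_nil]; exact S.one_mem
  | cons p e ih => rw [weight_cons]; exact S.mul_mem ih (hS e)

lemma weight_reverse_mul [HasReverse W]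
    (hrev : ∀ {a b : W} (e : a ⟶ b), wt (Quiver.reverse e) * wt e = 1) {a b : W}
    (p : Path a b) : p.reverse.weight wt * p.weight wt = 1 := by
  induction p with
  | nil => simp
  | cons p e ih =>
    rw [reverse, weight_comp, Hom.toPath, weight_cons, weight_nil, weight_cons, one_mul]
    calc wt (Quiver.reverse e) * p.reverse.weight wt * (p.weight wt * wt e)
        = (p.reverse.weight wt * p.weight wt) * (wt (Quiver.reverse e) * wt e) := by ac_rfl
      _ = 1 := by rw [ih, hrev, one_mul]

@[simp] lemma getElem_vertices_length {a b : W} (p : Path a b) :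
    p.vertices[p.length]'(by simp) = b := by
  simp [← p.vertices_getLast, List.getLast_eq_getElem]

lemma nodup_vertices_of_comp {a b c : W} {p : Path a b} {q : Path b c}
    (h : (p.comp q).vertices.Nodup) : p.vertices.Nodup ∧ q.vertices.Nodup := by
  rw [vertices_comp, List.nodup_append] at h
  refine ⟨?_, h.2.1⟩
  rw [← dropLast_append_end_eq, List.nodup_append]
  exact ⟨h.1, List.nodup_singleton b, fun x hx y hy => List.mem_singleton.mp hy ▸
    h.2.2 x hx b q.start_mem_vertices⟩

lemma exists_nodup_weight_eq
    (hsimple : ∀ {b c : W} (q : Path c b), q.vertices.Nodup →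
      ∀ e : b ⟶ c, (q.cons e).weight wt = 1) {a b : W} (p : Path a b) :
    ∃ s : Path a b, s.vertices.Nodup ∧ s.weight wt = p.weight wt := by
  induction p with
  | nil => exact ⟨nil, by simp, rfl⟩
  | @cons b c p e ih =>
    obtain ⟨s, hs, hsw⟩ := ih
    by_cases hc : c ∈ s.vertices
    · obtain ⟨s₁, s₂, rfl⟩ := s.exists_eq_comp_of_mem_vertices hc
      obtain ⟨hs₁, hs₂⟩ := nodup_vertices_of_comp hs
      refine ⟨s₁, hs₁, ?_⟩
      rw [weight_cons, ← hsw, weight_comp, mul_assoc, ← weight_cons, hsimple s₂ hs₂ e,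
        mul_one]
    · refine ⟨s.cons e, ?_, by rw [weight_cons, weight_cons, hsw]⟩
      rw [vertices_cons, List.concat_eq_append, List.nodup_append]
      exact ⟨hs, List.nodup_singleton c, fun x hx y hy hxy =>
        hc (List.mem_singleton.mp hy ▸ hxy ▸ hx)⟩

lemma weight_eq_one_of_closed
    (hsimple : ∀ {b c : W} (q : Path c b), q.vertices.Nodup →
      ∀ e : b ⟶ c, (q.cons e).weight wt = 1) {a : W} (p : Path a a) :
    p.weight wt = 1 := by
  obtain ⟨s, hs, hsw⟩ := exists_nodup_weight_eq hsimple p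
  cases s with
  | nil => rw [← hsw, weight_nil]
  | cons s e =>
    rw [vertices_cons, List.concat_eq_append, List.nodup_append] at hs
    exact absurd rfl (hs.2.2 a s.start_mem_vertices a (List.mem_singleton_self a))

end Path

theorem exists_potential [HasReverse W] (hconn : ∀ a b : W, Nonempty (Path a b))
    (hrev : ∀ {a b : W} (e : a ⟶ b), wt (Quiver.reverse e) * wt e = 1)
    (hclosed : ∀ {a : W} (p : Path a a), p.weight wt = 1)
    (S : Submonoid α) (hS : ∀ {a b : W} (e : a ⟶ b), wt e ∈ S) :
    ∃ d : W → α, (∀ a, d a ∈ S) ∧ ∀ {a b : W} (e : a ⟶ b), d a * wt e = d b := by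
  rcases isEmpty_or_nonempty W with hW | ⟨⟨a₀⟩⟩
  · exact ⟨fun _ => 1, fun a => isEmptyElim a, fun {a} => isEmptyElim a⟩
  let π (b : W) : Path a₀ b := (hconn a₀ b).some
  refine ⟨fun b => (π b).weight wt, fun b => (π b).weight_mem S hS, fun {a b} e => ?_⟩
  have hloop := hclosed (((π a).cons e).comp (π b).reverse)
  rw [Path.weight_comp, Path.weight_cons] at hloop
  calc (π a).weight wt * wt e
      = (π a).weight wt * wt e * ((π b).reverse.weight wt * (π b).weight wt) := by
        rw [Path.weight_reverse_mul hrev, mul_one]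
    _ = (π b).weight wt := by rw [← mul_assoc, hloop, one_mul]

end Quiver

namespace MixedCycle

variable {G : Multigraph V E} {α : Type*} [CommMonoid α]

instance (C : MixedCycle G) : NeZero C.n := ⟨by have := C.two_le; omega⟩

-- `cycleWeight M C` unfolds to `C.weight (stepWeight M)`.
def weight (w : E → V → V → α) (C : MixedCycle G) : α :=
  ∏ i, w (C.edge i) (C.vert i) (C.vert (i + 1))

lemma weight_eq_one_of_potential {w : E → V → V → α} {d : V → α}
    (hd : ∀ v, IsUnit (d v)) (hpot : ∀ e u v, G.ends e = s(u, v) → d u * w e u v = d v)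
    (C : MixedCycle G) : C.weight w = 1 := by
  have hunit : IsUnit (∏ i, d (C.vert i)) := IsUnit.prod_univ_iff.mpr fun i => hd _
  refine hunit.mul_eq_left.mp ?_
  calc (∏ i, d (C.vert i)) * C.weight w
      = ∏ i, d (C.vert i) * w (C.edge i) (C.vert i) (C.vert (i + 1)) := by
        rw [weight, Finset.prod_mul_distrib]
    _ = ∏ i, d (C.vert (i + 1)) := Finset.prod_congr rfl fun i _ => hpot _ _ _ (C.ends_eq i)
    _ = ∏ i, d (C.vert i) := Equiv.prod_comp (Equiv.addRight 1) fun i => d (C.vert i)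

end MixedCycle

namespace Multigraph

variable {G : Multigraph V E}

section ClosedWalk

variable {n : ℕ} {vert : ZMod n → V} {edge : ZMod n → E}

lemma injective_edge_of_closed_walk (hvert : Function.Injective vert)
    (hends : ∀ i, G.ends (edge i) = s(vert i, vert (i + 1)))
    (hback : ∀ i, edge (i + 1) ≠ edge i) : Function.Injective edge := by
  intro i j hij
  rcases Sym2.eq_iff.mp ((hends i).symm.trans (hij ▸ hends j)) with ⟨h, -⟩ | ⟨h, -⟩
  · exact hvert h
  · obtain rfl := hvert h
    exact absurd hij (hback j)

variable {α : Type*} [CommMonoid α] {w : E → V → V → α}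

lemma prod_eq_one_of_closed_walk [NeZero n]
    (hw : ∀ e u v, G.ends e = s(u, v) → w e u v * w e v u = 1)
    (hcyc : ∀ C : MixedCycle G, C.weight w = 1) (hvert : Function.Injective vert)
    (hends : ∀ i, G.ends (edge i) = s(vert i, vert (i + 1))) :
    ∏ i, w (edge i) (vert i) (vert (i + 1)) = 1 := by
  have hsucc (i : ZMod n) : i + 1 ≠ i := fun h =>
    G.loopless (edge i) (by rw [hends, h]; exact Sym2.mk_isDiag_iff.2 rfl)
  have hn : 2 ≤ n := by
    have : Nontrivial (ZMod n) := nontrivial_of_ne 1 0 (by simpa using hsucc 0)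
    have := ZMod.nontrivial_iff.mp this
    have := NeZero.ne n
    omega
  by_cases hback : ∀ i, edge (i + 1) ≠ edge i
  · exact hcyc ⟨n, hn, vert, edge, hvert,
      injective_edge_of_closed_walk hvert hends hback, hends⟩
  -- otherwise the walk traverses a single edge back and forth
  push Not at hback
  obtain ⟨i, hi⟩ := hback
  have hi2 : i + 1 + 1 = i := by
    rcases Sym2.eq_iff.mp ((hends (i + 1)).symm.trans (hi ▸ hends i)) with ⟨h, -⟩ | ⟨-, h⟩
    · exact absurd (hvert h) (hsucc i)
    · exact hvert h
  have h2 : n ∣ 2 := by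
    rw [← ZMod.natCast_eq_zero_iff]
    linear_combination hi2
  obtain rfl : n = 2 := le_antisymm (Nat.le_of_dvd two_pos h2) hn
  have h11 : (1 : ZMod 2) + 1 = 0 := rfl
  have h10 : edge 1 = edge 0 := by
    rcases (by decide : ∀ j : ZMod 2, j = 0 ∨ j = 1) i with rfl | rfl
    · simpa using hi
    · rw [h11] at hi
      exact hi.symm
  have h0 := hends 0
  rw [zero_add] at h0
  rw [show (Finset.univ : Finset (ZMod 2)) = {0, 1} from rfl, Finset.prod_pair zero_ne_one,
    zero_add, h11, h10]
  exact hw _ _ _ h0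

end ClosedWalk

def AsQuiver (_ : Multigraph V E) : Type := V

-- `(α := V)` keeps the ends in `Sym2 V`, as for `G.ends`, rather than in `Sym2 G.AsQuiver`.
instance (G : Multigraph V E) : Quiver G.AsQuiver :=
  ⟨fun u v => {e : E // G.ends e = Sym2.mk (α := V) u v}⟩

instance (G : Multigraph V E) : Quiver.HasReverse G.AsQuiver :=
  ⟨fun e => ⟨e.1, e.2.trans Sym2.eq_swap⟩⟩

def arrowWeight {α : Type*} (w : E → V → V → α) {u v : G.AsQuiver} (e : u ⟶ v) : α :=
  w e.1 u v

lemma Connected.nonempty_path (hconn : G.Connected) (u v : G.AsQuiver) :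
    Nonempty (Quiver.Path u v) := by
  induction hconn u v with
  | refl => exact ⟨.nil⟩
  | tail _ hstep ih =>
    obtain ⟨e, -, he⟩ := hstep
    obtain ⟨p⟩ := ih
    exact ⟨p.cons ⟨e, he⟩⟩

end Multigraph

namespace Quiver.Path

open Multigraph

variable {G : Multigraph V E}

def edges {u : G.AsQuiver} : ∀ {v : G.AsQuiver}, Path u v → List E
  | _, nil => []
  | _, cons p e => p.edges ++ [e.1]

@[simp] lemma edges_cons {u v x : G.AsQuiver} (p : Path u v) (e : v ⟶ x) :
    (p.cons e).edges = p.edges ++ [e.1] := rfl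

@[simp] lemma length_edges {u v : G.AsQuiver} (p : Path u v) :
    p.edges.length = p.length := by
  induction p with
  | nil => rfl
  | cons p e ih => simp [ih]

lemma ends_edges_getElem {u v : G.AsQuiver} (p : Path u v) (i : ℕ) (hi : i < p.length) :
    G.ends (p.edges[i]'(by simpa using hi)) =
      Sym2.mk (α := V) (p.vertices[i]'(by simp; omega))
        (p.vertices[i + 1]'(by simpa using hi)) := by
  induction p with
  | nil => simp at hi
  | @cons x y p e ih =>
    rcases Nat.lt_succ_iff_lt_or_eq.mp hi with hi | rfl
    · simpa [vertices_cons, List.getElem_append, hi, hi.le] using ih hi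
    · simpa [vertices_cons, List.getElem_append_left] using e.2

variable {α : Type*} [CommMonoid α] {w : E → V → V → α}

lemma weight_eq_prod {u v : G.AsQuiver} (p : Path u v) :
    p.weight (arrowWeight w) = ∏ i : Fin p.length,
      w (p.edges[i]'(by simp)) (p.vertices[i]'(by simp)) (p.vertices[i.1 + 1]'(by simp)) := by
  induction p with
  | nil => exact (weight_nil _ _).trans (Fin.prod_univ_zero _).symm
  | @cons x y p e ih =>
    refine (weight_cons _ _ _).trans (Eq.trans ?_ (Fin.prod_univ_castSucc (n := p.length) _).symm)
    simp [ih, vertices_cons, List.getElem_append_left, arrowWeight]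

lemma weight_cons_eq_one_of_nodup (hw : ∀ e u v, G.ends e = s(u, v) → w e u v * w e v u = 1)
    (hcyc : ∀ C : MixedCycle G, C.weight w = 1) {b c : G.AsQuiver} (q : Path c b)
    (hq : q.vertices.Nodup) (e : b ⟶ c) : (q.cons e).weight (arrowWeight w) = 1 := by
  let vert : Fin (q.length + 1) → V := fun i => q.vertices[i.1]'(by simpa using i.2)
  let edge : Fin (q.length + 1) → E := Fin.lastCases e.1 fun j => q.edges[j.1]'(by simp)
  have hvert : Function.Injective vert := fun i j h => Fin.ext ((hq.getElem_inj_iff).mp h)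
  have hends (i : Fin (q.length + 1)) : G.ends (edge i) = s(vert i, vert (i + 1)) := by
    induction i using Fin.lastCases with
    | last => simpa [edge, vert, Fin.last_add_one] using e.2
    | cast j => simpa [edge, vert, Fin.coeSucc_eq_succ] using q.ends_edges_getElem j j.2
  -- `ZMod (q.length + 1)` is definitionally `Fin (q.length + 1)`
  have key : ∏ i, w (edge i) (vert i) (vert (i + 1)) = 1 :=
    Multigraph.prod_eq_one_of_closed_walk (n := q.length + 1) hw hcyc hvert hends
  rw [weight_cons, weight_eq_prod, ← key]
  refine Eq.trans ?_ (Fin.prod_univ_castSucc _).symm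
  simp [edge, vert, Fin.coeSucc_eq_succ, Fin.last_add_one, arrowWeight]

end Quiver.Path

theorem Multigraph.Connected.exists_potential {G : Multigraph V E} {α : Type*} [CommMonoid α]
    {w : E → V → V → α} (hconn : G.Connected)
    (hw : ∀ e u v, G.ends e = s(u, v) → w e u v * w e v u = 1)
    (hcyc : ∀ C : MixedCycle G, C.weight w = 1)
    (S : Submonoid α) (hS : ∀ e u v, G.ends e = s(u, v) → w e u v ∈ S) :
    ∃ d : V → α, (∀ v, d v ∈ S) ∧
      ∀ e u v, G.ends e = s(u, v) → d u * w e u v = d v := by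
  obtain ⟨d, hdS, hd⟩ := Quiver.exists_potential (wt := arrowWeight w) hconn.nonempty_path
    (fun e => hw _ _ _ (e.2.trans Sym2.eq_swap))
    (Quiver.Path.weight_eq_one_of_closed fun q hq e =>
      q.weight_cons_eq_one_of_nodup hw hcyc hq e)
    S (fun e => hS _ _ _ e.2)
  exact ⟨d, hdS, fun e u v he => hd ⟨e, he⟩⟩

lemma omega6_sq : omega6 ^ 2 = omega6 - 1 := by
  have h3 : Real.sqrt 3 ^ 2 = 3 := Real.sq_sqrt (by norm_num)
  apply Complex.ext <;> simp [sq, omega6] <;> nlinarith [h3]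

lemma omega6_pow_three : omega6 ^ 3 = -1 := by
  linear_combination (omega6 + 1) * omega6_sq

lemma omega6_pow_six : omega6 ^ 6 = 1 := by
  rw [show 6 = 3 * 2 from rfl, pow_mul, omega6_pow_three]
  norm_num

lemma conj_omega6 : (starRingEnd ℂ) omega6 = omega6 ^ 5 := by
  have hconj : (starRingEnd ℂ) omega6 = 1 - omega6 := by
    apply Complex.ext <;> simp [omega6]; norm_num
  rw [hconj]
  linear_combination -omega6 ^ 2 * omega6_pow_three + omega6_sq

lemma norm_eq_one_of_mem_powers_omega6 {z : ℂ} (hz : z ∈ Submonoid.powers omega6) :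
    ‖z‖ = 1 := by
  obtain ⟨k, rfl⟩ := hz
  rw [norm_pow, norm_eq_one_of_pow_eq_one omega6_pow_six (by norm_num), one_pow]

lemma isSixthRoots_iff_mem_powers {d : V → ℂ} :
    IsSixthRoots d ↔ ∀ v, d v ∈ Submonoid.powers omega6 := by
  refine forall_congr' fun v => ⟨fun ⟨k, _, hk⟩ => ⟨k, hk.symm⟩, fun ⟨k, hk⟩ => ?_⟩
  exact ⟨k % 6, by omega, by rw [← hk, ← pow_eq_pow_mod k omega6_pow_six]⟩

lemma IsSixthRoots.norm_eq_one {d : V → ℂ} (hd : IsSixthRoots d) (v : V) : ‖d v‖ = 1 :=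
  norm_eq_one_of_mem_powers_omega6 (isSixthRoots_iff_mem_powers.mp hd v)

lemma IsSixthRoots.ne_zero {d : V → ℂ} (hd : IsSixthRoots d) (v : V) : d v ≠ 0 :=
  norm_ne_zero_iff.mp (by rw [hd.norm_eq_one]; exact one_ne_zero)

section HermitianAdjacency

variable [DecidableEq V] {G : Multigraph V E}

lemma stepWeight_mem_powers (M : MixedOrientation G) (e : E) (u v : V) :
    stepWeight M e u v ∈ Submonoid.powers omega6 := by
  unfold stepWeight
  split
  · exact one_mem _
  · split
    · exact ⟨1, pow_one _⟩
    · exact ⟨5, conj_omega6.symm⟩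

lemma stepWeight_mul_swap (M : MixedOrientation G) {e : E} {u v : V}
    (he : G.ends e = s(u, v)) : stepWeight M e u v * stepWeight M e v u = 1 := by
  have huv : u ≠ v := fun h => G.loopless e (by rw [he, h]; exact Sym2.mk_isDiag_iff.2 rfl)
  have hω : omega6 * (starRingEnd ℂ) omega6 = 1 := by
    rw [conj_omega6, ← pow_succ', omega6_pow_six]
  unfold stepWeight
  split
  · exact one_mul 1
  · next a b ho =>
    rcases Sym2.eq_iff.mp ((M.compat e a b ho).symm.trans he) with ⟨rfl, rfl⟩ | ⟨rfl, rfl⟩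
    · simpa [huv] using hω
    · simpa [huv.symm, mul_comm] using hω

@[simp] lemma stepWeight_triv (e : E) (u v : V) : stepWeight G.triv e u v = 1 := rfl

lemma herm_apply [Fintype V] [Fintype E] (M : MixedOrientation G) (u v : V) :
    herm M u v = ∑ e ∈ univ.filter (G.ends · = s(u, v)), stepWeight M e u v := by
  rw [herm, Matrix.of_apply, Finset.sum_filter]

theorem switching_triv_iff [Fintype V] [Fintype E] (M : MixedOrientation G) :
    Switching G.triv M ↔ ∃ d : V → ℂ, IsSixthRoots d ∧
      ∀ e u v, G.ends e = s(u, v) → d u * stepWeight M e u v = d v := by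
  refine exists_congr fun d => and_congr_right fun hd => ?_
  simp only [← Matrix.ext_iff, Matrix.inv_diagonal_mul_mul_diagonal_apply hd.ne_zero, herm_apply,
    stepWeight_triv, Finset.sum_const, nsmul_one]
  constructor
  · intro h e u v he
    have hmem : e ∈ univ.filter (G.ends · = s(u, v)) := by simpa using he
    -- the unit complex numbers `d u * stepWeight M e' u v * (d v)⁻¹` add up to their number
    refine (mul_inv_eq_one₀ (hd.ne_zero v)).mp (Complex.eq_one_of_sum_eq_card (z := fun e' =>
      d u * stepWeight M e' u v * (d v)⁻¹) (fun e' _ => ?_) ?_ hmem)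
    · rw [norm_mul, norm_mul, norm_inv, hd.norm_eq_one, hd.norm_eq_one,
        norm_eq_one_of_mem_powers_omega6 (stepWeight_mem_powers M e' u v)]
      norm_num
    · rw [← Finset.sum_mul, ← Finset.mul_sum, h u v]
      field_simp [hd.ne_zero u, hd.ne_zero v]
  · intro h u v
    rw [Finset.sum_congr rfl fun e he =>
      (eq_inv_mul_iff_mul_eq₀ (hd.ne_zero u)).mpr (h e u v (Finset.mem_filter.mp he).2)]
    rw [Finset.sum_const, nsmul_eq_mul]
    ring

end HermitianAdjacency

variable [DecidableEq V]

/-- Corollary cosunder: a connected mixed multigraph can be obtained from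
its underlying graph by a three-way switching iff it is positive (every mixed cycle has
weight `1`). -/
theorem switching_from_underlying_iff_positive [Fintype V] [Fintype E] {G : Multigraph V E}
    (hconn : G.Connected) (M : MixedOrientation G) :
    Switching G.triv M ↔ ∀ C : MixedCycle G, cycleWeight M C = 1 := by
  rw [switching_triv_iff]
  constructor
  · rintro ⟨d, hd, hpot⟩ C
    exact C.weight_eq_one_of_potential (fun v => (hd.ne_zero v).isUnit) hpot
  · intro hpos
    obtain ⟨d, hdS, hpot⟩ := hconn.exists_potential (fun e u v => stepWeight_mul_swap M) hpos
      (Submonoid.powers omega6) fun e u v _ => stepWeight_mem_powers M e u v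
    exact ⟨d, isSixthRoots_iff_mem_powers.mpr hdS, hpot⟩
end

section
/- Let M' and M'' be two connected mixed multigraphs with the same underlying graph G, and let T be a spanning tree of G. Then wt_{M'}(C) = wt_{M''}(C) for every mixed cycle C of G if and only if wt_{M'}(C) = wt_{M''}(C) for every fundamental cycle C ∈ B_T(G); likewise, wt_{M'}(C) = conj(wt_{M''}(C)) for every mixed cycle C of G if and only if wt_{M'}(C) = conj(wt_{M''}(C)) for every fundamental cycle C ∈ B_T(G). -/
/-! Put `f = wt_{M'} / σ ∘ wt_{M''}` edgewise, a gain function on `ℂˣ` (`σ` is the identity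
or complex conjugation); the theorem says that if `f` has gain `1` on every fundamental cycle,
then on every cycle. For any edge `e`, the cycles inside `T ∪ {e}` are fundamental, and a closed
walk is made of cycles and backtracks, so every closed walk in `T ∪ {e}` has gain `1`. Hence,
with `φ v` the gain of a fixed tree walk from a root to `v`, `f(e, a, b) = φ b / φ a` for every
edge, and the gain of any cycle telescopes to `1`. -/

open Complex Finset

noncomputable section

variable {V E : Type}

variable [DecidableEq V]

section GainGraph

omit [DecidableEq V]

open Multigraph Function

variable {α : Type*} {G : Multigraph V E}

def IsGainFunction [Monoid α] (G : Multigraph V E) (f : E → V → V → α) : Prop :=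
  ∀ e u v, G.ends e = s(u, v) → f e u v * f e v u = 1

def MixedCycle.gain [CommMonoid α] (f : E → V → V → α) (C : MixedCycle G) : α :=
  haveI : NeZero C.n := ⟨by have := C.two_le; omega⟩
  ∏ i : ZMod C.n, f (C.edge i) (C.vert i) (C.vert (i + 1))

def IsBalanced [CommMonoid α] (G : Multigraph V E) (f : E → V → V → α) (S : Set E) : Prop :=
  ∀ C : MixedCycle G, (∀ i, C.edge i ∈ S) → C.gain f = 1

lemma ZMod.prod_val_eq_prod_range {M : Type*} [CommMonoid M] (n : ℕ) [NeZero n] (g : ℕ → M) :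
    ∏ i : ZMod n, g i.val = ∏ i ∈ range n, g i :=
  prod_nbij' ZMod.val (fun i => (i : ZMod n)) (by simp [ZMod.val_lt]) (by simp)
    (fun i _ => ZMod.natCast_zmod_val i)
    (fun i hi => ZMod.val_cast_of_lt (mem_range.1 hi)) (fun _ _ => rfl)

inductive Multigraph.Walk (G : Multigraph V E) : V → V → Type
  | nil (u : V) : G.Walk u u
  | cons {u v w : V} (e : E) (h : G.ends e = s(u, v)) (p : G.Walk v w) : G.Walk u w

namespace Multigraph.Walk

def length {u v : V} : G.Walk u v → ℕ
  | nil _ => 0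
  | cons _ _ p => p.length + 1

def edges {u v : V} : G.Walk u v → List E
  | nil _ => []
  | cons e _ p => e :: p.edges

def append {u v w : V} : G.Walk u v → G.Walk v w → G.Walk u w
  | nil _, q => q
  | cons e h p, q => cons e h (p.append q)

def gain [Monoid α] (f : E → V → V → α) {u v : V} : G.Walk u v → α
  | nil _ => 1
  | cons (u := u) (v := v) e _ p => f e u v * p.gain f

def getVert {u v : V} : G.Walk u v → ℕ → V
  | nil u, _ => u
  | cons (u := u) _ _ _, 0 => u
  | cons _ _ p, i + 1 => p.getVert i

-- `d` is a junk value, returned past the end of the walk.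
def getEdge (d : E) {u v : V} : G.Walk u v → ℕ → E
  | nil _, _ => d
  | cons e _ _, 0 => e
  | cons _ _ p, i + 1 => p.getEdge d i

variable {u v w x : V}

@[simp] lemma length_append (p : G.Walk u v) (q : G.Walk v w) :
    (p.append q).length = p.length + q.length := by
  induction p with
  | nil => simp [append, length]
  | cons e h p ih => simp only [append, length, ih]; omega

@[simp] lemma edges_append (p : G.Walk u v) (q : G.Walk v w) :
    (p.append q).edges = p.edges ++ q.edges := by
  induction p with
  | nil => rfl
  | cons e h p ih => simp [append, edges, ih]

@[simp] lemma gain_append [Monoid α] (f : E → V → V → α) (p : G.Walk u v) (q : G.Walk v w) :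
    (p.append q).gain f = p.gain f * q.gain f := by
  induction p with
  | nil => simp [append, gain]
  | cons e h p ih => simp [append, gain, ih, mul_assoc]

@[simp] lemma getVert_zero (p : G.Walk u v) : p.getVert 0 = u := by
  cases p <;> rfl

lemma getVert_of_length_le (p : G.Walk u v) {i : ℕ} (hi : p.length ≤ i) : p.getVert i = v := by
  induction p generalizing i with
  | nil => rfl
  | cons e h p ih =>
    cases i with
    | zero => simp [length] at hi
    | succ i => exact ih (by simpa [length] using hi)

lemma getVert_append (p : G.Walk u v) (q : G.Walk v w) (i : ℕ) :
    (p.append q).getVert (p.length + i) = q.getVert i := by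
  induction p with
  | nil => simp [append, length]
  | cons e h p ih => rw [length, Nat.add_right_comm]; exact ih q

lemma ends_getEdge (d : E) (p : G.Walk u v) {i : ℕ} (hi : i < p.length) :
    G.ends (p.getEdge d i) = s(p.getVert i, p.getVert (i + 1)) := by
  induction p generalizing i with
  | nil => simp [length] at hi
  | cons e h p ih =>
    cases i with
    | zero => simpa [getEdge, getVert] using h
    | succ i => exact ih (by simpa [length] using hi)

lemma getEdge_mem_edges (d : E) (p : G.Walk u v) {i : ℕ} (hi : i < p.length) :
    p.getEdge d i ∈ p.edges := by
  induction p generalizing i with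
  | nil => simp [length] at hi
  | cons e h p ih =>
    cases i with
    | zero => simp [getEdge, edges]
    | succ i => exact List.mem_cons_of_mem _ (ih (by simpa [length] using hi))

lemma gain_eq_prod_range [CommMonoid α] (f : E → V → V → α) (d : E) (p : G.Walk u v) :
    p.gain f = ∏ i ∈ range p.length, f (p.getEdge d i) (p.getVert i) (p.getVert (i + 1)) := by
  induction p with
  | nil => rfl
  | cons e h p ih =>
    rw [length, prod_range_succ', gain, ih, mul_comm]
    simp [getEdge, getVert]

lemma exists_append_eq (p : G.Walk u v) {i : ℕ} (hi : i ≤ p.length) (hx : p.getVert i = x) :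
    ∃ (p₁ : G.Walk u x) (p₂ : G.Walk x v), p₁.length = i ∧ p₁.append p₂ = p := by
  induction p generalizing i with
  | nil =>
    obtain rfl : i = 0 := by simpa [length] using hi
    subst hx
    exact ⟨nil _, nil _, rfl, rfl⟩
  | cons e h p ih =>
    cases i with
    | zero =>
      subst hx
      exact ⟨nil _, cons e h p, rfl, rfl⟩
    | succ i =>
      obtain ⟨p₁, p₂, rfl, rfl⟩ := ih (by simpa [length] using hi) hx
      exact ⟨cons e h p₁, p₂, rfl, rfl⟩

lemma getVert_val_add_one (p : G.Walk u u) {n : ℕ} [NeZero n] (hn : p.length = n)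
    (i : ZMod n) : p.getVert (i + 1).val = p.getVert (i.val + 1) := by
  have hval : (i + 1).val = (i.val + 1) % n := by
    rw [ZMod.val_add, ZMod.val_one_eq_one_mod, Nat.add_mod_mod]
  rcases Nat.lt_or_ge (i.val + 1) n with hlt | hge
  · rw [hval, Nat.mod_eq_of_lt hlt]
  · have hi : i.val + 1 = n := le_antisymm (ZMod.val_lt i) hge
    rw [hval, hi, Nat.mod_self, getVert_zero, getVert_of_length_le p hn.le]

lemma gain_eq_prod_zmod [CommMonoid α] (f : E → V → V → α) (d : E) (p : G.Walk u u)
    {n : ℕ} [NeZero n] (hn : p.length = n) :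
    p.gain f = ∏ i : ZMod n, f (p.getEdge d i.val) (p.getVert i.val) (p.getVert (i + 1).val) := by
  simp_rw [getVert_val_add_one p hn, gain_eq_prod_range f d, hn]
  exact (ZMod.prod_val_eq_prod_range n _).symm

lemma exists_loop_of_getVert_eq (p : G.Walk u v) {i j : ℕ} (hij : i ≤ j) (hj : j ≤ p.length)
    (h : p.getVert i = p.getVert j) :
    ∃ (x : V) (p₁ : G.Walk u x) (q : G.Walk x x) (p₂ : G.Walk x v),
      q.length = j - i ∧ p₁.append (q.append p₂) = p := by
  obtain ⟨p₁, r, hi, hp⟩ := p.exists_append_eq (hij.trans hj) rfl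
  have hr : r.getVert (j - i) = p.getVert i := by
    have := getVert_append p₁ r (j - i)
    rw [hp, hi, Nat.add_sub_cancel' hij] at this
    exact this.symm.trans h.symm
  obtain ⟨q, p₂, hq, rfl⟩ := r.exists_append_eq (by
    have := congrArg length hp; simp only [length_append] at this; omega) hr
  exact ⟨_, p₁, q, p₂, hq, hp⟩

end Multigraph.Walk

lemma injective_edge_of_injective_vert {n : ℕ} (hn : n ≠ 2) {vert : ZMod n → V}
    {edge : ZMod n → E} (hv : Injective vert)
    (hends : ∀ i, G.ends (edge i) = s(vert i, vert (i + 1))) : Injective edge := by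
  intro i j hij
  have h := hends i
  rw [hij, hends j, Sym2.eq_iff] at h
  rcases h with ⟨h, -⟩ | ⟨h₁, h₂⟩
  · exact (hv h).symm
  · have h2 : ((2 : ℕ) : ZMod n) = 0 := by
      push_cast
      linear_combination hv h₂ - hv h₁
    obtain rfl | rfl := (Nat.dvd_prime Nat.prime_two).1 ((ZMod.natCast_eq_zero_iff 2 n).1 h2)
    · exact Subsingleton.elim i j
    · exact absurd rfl hn

lemma IsBalanced.prod_eq_one_of_injective [CommMonoid α] {f : E → V → V → α} {S : Set E}
    (hS : IsBalanced G f S) (hf : IsGainFunction G f) {n : ℕ} [NeZero n] {vert : ZMod n → V}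
    {edge : ZMod n → E} (hv : Injective vert) (hmem : ∀ i, edge i ∈ S)
    (hends : ∀ i, G.ends (edge i) = s(vert i, vert (i + 1))) :
    ∏ i, f (edge i) (vert i) (vert (i + 1)) = 1 := by
  have hcycle (h2 : 2 ≤ n) (he : Injective edge) :
      ∏ i, f (edge i) (vert i) (vert (i + 1)) = 1 :=
    hS ⟨n, h2, vert, edge, hv, he, hends⟩ hmem
  by_cases hn : n = 2
  · subst hn
    by_cases he : edge 0 = edge 1
    · rw [show (univ : Finset (ZMod 2)) = {0, 1} from rfl, prod_pair (by decide), ← he]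
      exact hf _ _ _ (hends 0)
    · refine hcycle le_rfl fun i j h => ?_
      fin_cases i <;> fin_cases j
      all_goals first | rfl | exact absurd h he | exact absurd h.symm he
  · have hn1 : n ≠ 1 := by
      rintro rfl
      exact G.loopless (edge 0) (by rw [hends, Subsingleton.elim (0 + 1 : ZMod 1) 0]; rfl)
    exact hcycle (by have := NeZero.ne n; omega) (injective_edge_of_injective_vert hn hv hends)

theorem Multigraph.Walk.gain_eq_one_of_isBalanced [CommMonoid α] {f : E → V → V → α}
    {S : Set E} (hS : IsBalanced G f S) (hf : IsGainFunction G f) {u : V} (p : G.Walk u u)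
    (hp : ∀ e ∈ p.edges, e ∈ S) : p.gain f = 1 := by
  induction hn : p.length using Nat.strong_induction_on generalizing u with
  | _ n ih =>
  rcases p with _ | ⟨d, hd, q⟩
  · rfl
  have : NeZero n := ⟨by rw [← hn]; exact Nat.succ_ne_zero _⟩
  generalize Walk.cons d hd q = p at hn hp ⊢
  by_cases hv : Injective fun i : ZMod n => p.getVert i.val
  · rw [p.gain_eq_prod_zmod f d hn]
    refine hS.prod_eq_one_of_injective hf hv
      (fun i => hp _ (p.getEdge_mem_edges d (hn ▸ ZMod.val_lt i))) fun i => ?_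
    rw [p.getVert_val_add_one hn]
    exact p.ends_getEdge d (hn ▸ ZMod.val_lt i)
  obtain ⟨i, j, hij, hne⟩ := not_injective_iff.1 hv
  wlog hlt : i.val < j.val generalizing i j
  · exact this j i hij.symm hne.symm
      (lt_of_le_of_ne (not_lt.1 hlt) fun h => hne (ZMod.val_injective n h).symm)
  obtain ⟨x, p₁, q, p₂, hq, rfl⟩ :=
    p.exists_loop_of_getVert_eq hlt.le (hn ▸ (ZMod.val_lt j).le) hij
  simp only [Walk.length_append] at hn
  simp only [Walk.edges_append, List.mem_append] at hp
  have hj := ZMod.val_lt j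
  have hq₁ : q.gain f = 1 := ih q.length (by omega) q (fun e he => hp e (by tauto)) rfl
  have hp₁₂ : (p₁.append p₂).gain f = 1 :=
    ih (p₁.length + p₂.length) (by omega) (p₁.append p₂)
      (fun e he => hp e (by simp only [Walk.edges_append, List.mem_append] at he; tauto))
      (Walk.length_append p₁ p₂)
  rw [Walk.gain_append, Walk.gain_append, hq₁, one_mul, ← Walk.gain_append, hp₁₂]

lemma ReachIn.exists_walk {S : Set E} {u v : V} (h : ReachIn G S u v) :
    ∃ p : G.Walk u v, ∀ e ∈ p.edges, e ∈ S := by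
  induction h using Relation.ReflTransGen.head_induction_on with
  | refl => exact ⟨.nil v, by simp [Walk.edges]⟩
  | head hstep _ ih =>
    obtain ⟨e, he, hends⟩ := hstep
    obtain ⟨p, hp⟩ := ih
    exact ⟨.cons e hends p, by simpa [Walk.edges, he] using hp⟩

lemma IsSpanningTree.isBalanced_insert [CommMonoid α] {f : E → V → V → α} {T : Set E}
    (hT : IsSpanningTree G T) (hfund : ∀ C, IsFundamentalCycle G T C → C.gain f = 1) (e : E) :
    IsBalanced G f (insert e T) := by
  intro C hC
  by_cases he : e ∈ T
  · rw [Set.insert_eq_of_mem he] at hC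
    exact absurd hC (hT.2 C)
  · exact hfund C ⟨e, he, hC⟩

lemma IsGainFunction.map {β : Type*} [Monoid α] [Monoid β]
    {f : E → V → V → α} (hf : IsGainFunction G f) (φ : α →* β) :
    IsGainFunction G fun e u v => φ (f e u v) := fun e u v h => by
  rw [← map_mul, hf e u v h, map_one]

lemma MixedCycle.gain_map {β : Type*} [CommMonoid α] [CommMonoid β]
    (f : E → V → V → α) (φ : α →* β) (C : MixedCycle G) :
    C.gain (fun e u v => φ (f e u v)) = φ (C.gain f) :=
  (map_prod φ _ _).symm

section CommGroup

variable [CommGroup α] {f g : E → V → V → α} {T : Set E}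

lemma IsSpanningTree.exists_potential (hT : IsSpanningTree G T) (hf : IsGainFunction G f)
    (hfund : ∀ C, IsFundamentalCycle G T C → C.gain f = 1) :
    ∃ φ : V → α, ∀ e a b, G.ends e = s(a, b) → f e a b = φ b / φ a := by
  rcases isEmpty_or_nonempty V with hV | ⟨⟨r⟩⟩
  · exact ⟨1, fun _ a => isEmptyElim a⟩
  choose W hW using fun v => (hT.1 r v).exists_walk
  choose W' hW' using fun v => (hT.1 v r).exists_walk
  refine ⟨fun v => (W v).gain f, fun e a b hab => ?_⟩
  have hbal := hT.isBalanced_insert hfund e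
  have hback : ((W' b).append (W b)).gain f = 1 :=
    Walk.gain_eq_one_of_isBalanced hbal hf _ fun x hx => by
      simp only [Walk.edges_append, List.mem_append] at hx
      exact Set.mem_insert_of_mem _ (hx.elim (hW' b x) (hW b x))
  have hround : ((W a).append (.cons e hab (W' b))).gain f = 1 :=
    Walk.gain_eq_one_of_isBalanced hbal hf _ fun x hx => by
      simp only [Walk.edges_append, Walk.edges, List.mem_append, List.mem_cons] at hx
      rcases hx with hx | rfl | hx
      · exact Set.mem_insert_of_mem _ (hW a x hx)
      · exact Set.mem_insert _ _
      · exact Set.mem_insert_of_mem _ (hW' b x hx)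
  simp only [Walk.gain_append, Walk.gain] at hback hround
  rw [eq_inv_of_mul_eq_one_left hback, ← mul_assoc, mul_inv_eq_one] at hround
  exact eq_div_of_mul_eq' (by rw [mul_comm]; exact hround)

lemma MixedCycle.gain_eq_one_of_potential {φ : V → α}
    (hφ : ∀ e a b, G.ends e = s(a, b) → f e a b = φ b / φ a) (C : MixedCycle G) :
    C.gain f = 1 := by
  have : NeZero C.n := ⟨by have := C.two_le; omega⟩
  simp only [MixedCycle.gain, hφ _ _ _ (C.ends_eq _), prod_div_distrib, div_eq_one]
  exact Fintype.prod_equiv (Equiv.addRight 1) _ _ fun _ => rfl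

theorem IsSpanningTree.gain_eq_one (hT : IsSpanningTree G T) (hf : IsGainFunction G f)
    (hfund : ∀ C, IsFundamentalCycle G T C → C.gain f = 1) (C : MixedCycle G) : C.gain f = 1 :=
  have ⟨_, hφ⟩ := hT.exists_potential hf hfund
  C.gain_eq_one_of_potential hφ

lemma IsGainFunction.div (hf : IsGainFunction G f) (hg : IsGainFunction G g) :
    IsGainFunction G fun e u v => f e u v / g e u v := fun e u v h => by
  rw [div_mul_div_comm, hf e u v h, hg e u v h, div_one]

lemma MixedCycle.gain_div (C : MixedCycle G) :
    C.gain (fun e u v => f e u v / g e u v) = C.gain f / C.gain g :=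
  prod_div_distrib ..

theorem IsSpanningTree.gain_eq_gain (hT : IsSpanningTree G T) (hf : IsGainFunction G f)
    (hg : IsGainFunction G g) (h : ∀ C, IsFundamentalCycle G T C → C.gain f = C.gain g)
    (C : MixedCycle G) : C.gain f = C.gain g := by
  rw [← div_eq_one, ← C.gain_div]
  exact hT.gain_eq_one (hf.div hg) (fun C hC => by rw [C.gain_div, div_eq_one]; exact h C hC) C

end CommGroup

end GainGraph

lemma omega6_mul_conj : omega6 * starRingEnd ℂ omega6 = 1 := by
  rw [mul_conj, normSq_mk, omega6]
  norm_num [← sq, div_pow]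

lemma isGainFunction_stepWeight {G : Multigraph V E} (M : MixedOrientation G) :
    IsGainFunction G (stepWeight M) := by
  intro e u v huv
  have hne : u ≠ v := fun h => G.loopless e (by rw [huv, h]; rfl)
  unfold stepWeight
  rcases ho : M.orient e with _ | ⟨a, b⟩
  · exact one_mul 1
  · rcases Sym2.eq_iff.1 ((M.compat e a b ho).symm.trans huv) with ⟨rfl, rfl⟩ | ⟨rfl, rfl⟩
    · simp [hne, omega6_mul_conj]
    · simp [hne.symm, mul_comm, omega6_mul_conj]

lemma isUnit_stepWeight {G : Multigraph V E} (M : MixedOrientation G) (e : E) (u v : V) :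
    IsUnit (stepWeight M e u v) := by
  unfold stepWeight
  split
  · exact isUnit_one
  · split
    · exact IsUnit.of_mul_eq_one _ omega6_mul_conj
    · exact IsUnit.of_mul_eq_one_right _ omega6_mul_conj

def stepUnit {G : Multigraph V E} (M : MixedOrientation G) (e : E) (u v : V) : ℂˣ :=
  (isUnit_stepWeight M e u v).unit

lemma isGainFunction_stepUnit {G : Multigraph V E} (M : MixedOrientation G) :
    IsGainFunction G (stepUnit M) := fun e u v h =>
  Units.ext (isGainFunction_stepWeight M e u v h)

lemma cycleWeight_eq_val_gain {G : Multigraph V E} (M : MixedOrientation G) (C : MixedCycle G) :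
    cycleWeight M C = C.gain (stepUnit M) := by
  simp [cycleWeight, MixedCycle.gain, stepUnit]

lemma cycleWeight_eq_map_iff {G : Multigraph V E} (σ : ℂ →+* ℂ) (M' M'' : MixedOrientation G)
    (C : MixedCycle G) :
    cycleWeight M' C = σ (cycleWeight M'' C) ↔
      C.gain (stepUnit M') = C.gain fun e u v => Units.map σ (stepUnit M'' e u v) := by
  rw [MixedCycle.gain_map, Units.ext_iff, Units.coe_map, cycleWeight_eq_val_gain,
    cycleWeight_eq_val_gain]
  rfl

theorem cycleWeight_eq_map_of_fundamental {G : Multigraph V E} {T : Set E}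
    (hT : IsSpanningTree G T) (M' M'' : MixedOrientation G) (σ : ℂ →+* ℂ)
    (h : ∀ C, IsFundamentalCycle G T C → cycleWeight M' C = σ (cycleWeight M'' C))
    (C : MixedCycle G) : cycleWeight M' C = σ (cycleWeight M'' C) :=
  (cycleWeight_eq_map_iff σ M' M'' C).2 <|
    hT.gain_eq_gain (isGainFunction_stepUnit M') ((isGainFunction_stepUnit M'').map _)
      (fun C hC => (cycleWeight_eq_map_iff σ M' M'' C).1 (h C hC)) C

theorem cycle_weights_iff_fundamental_general {G : Multigraph V E}
    (T : Set E) (hT : IsSpanningTree G T)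
    (M' M'' : MixedOrientation G) :
    ((∀ C : MixedCycle G, cycleWeight M' C = cycleWeight M'' C) ↔
      (∀ C : MixedCycle G, IsFundamentalCycle G T C →
        cycleWeight M' C = cycleWeight M'' C)) ∧
    ((∀ C : MixedCycle G, cycleWeight M' C = (starRingEnd ℂ) (cycleWeight M'' C)) ↔
      (∀ C : MixedCycle G, IsFundamentalCycle G T C →
        cycleWeight M' C = (starRingEnd ℂ) (cycleWeight M'' C))) :=
  ⟨⟨fun h C _ => h C, cycleWeight_eq_map_of_fundamental hT M' M'' (RingHom.id ℂ)⟩,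
    ⟨fun h C _ => h C, cycleWeight_eq_map_of_fundamental hT M' M'' (starRingEnd ℂ)⟩⟩

/-- Remark: equality (resp. conjugacy) of weights on all mixed cycles is
equivalent to equality (resp. conjugacy) of weights on all fundamental cycles with
respect to a spanning tree. -/
theorem cycle_weights_iff_fundamental [Fintype V] [Fintype E] {G : Multigraph V E}
    (hconn : G.Connected) (T : Set E) (hT : IsSpanningTree G T)
    (M' M'' : MixedOrientation G) :
    ((∀ C : MixedCycle G, cycleWeight M' C = cycleWeight M'' C) ↔
      (∀ C : MixedCycle G, IsFundamentalCycle G T C →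
        cycleWeight M' C = cycleWeight M'' C)) ∧
    ((∀ C : MixedCycle G, cycleWeight M' C = (starRingEnd ℂ) (cycleWeight M'' C)) ↔
      (∀ C : MixedCycle G, IsFundamentalCycle G T C →
        cycleWeight M' C = (starRingEnd ℂ) (cycleWeight M'' C))) :=
  cycle_weights_iff_fundamental_general T hT M' M''

end
end
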